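/- arXiv:2107.02449 — 6 statements merged into one kernel-verified Lean document; each statement's English description precedes it below -/
import Mathlib

section
/- Let E be a real Banach space, let φ : [1,2] → E be differentiable, let Ω : [1,2] → E and c₁, c₂ : [1,2] → E be continuous, and let ψ : [1,2] → E. Assume (D1): v ↦ φ'(v) − 2Ω(v) is differentiable on [1,2] with derivative c₁(v); and assume (D2): 2vφ'(v) − 2φ(v) − v²ψ(v) = c₂(v) for all v ∈ [1,2]. Define the charge Q₁(v) = (v/2)·ψ(v) − 2Ω(v) + φ(v)/v. Then the function v ↦ Q₁(v) + c₂(v)/(2v) is differentiable on [1,2] with derivative c₁(v). In particular, if c₁ ≡ 0 then v ↦ Q₁(v) + c₂(v)/(2v) is constant on [1,2], and if moreover c₂ ≡ 0 then the charge Q₁ is conserved: Q₁(v) = Q₁(1) for all v ∈ [1,2]. -/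
open Set

/-- Conservation law for the charge `Q₁ = (r/2)((Ω tr χ)̇ − (4/r)Ω̇) + φ̇/r` along
the outgoing null hypersurface `{1 ≤ v ≤ 2}` at Minkowski: the function
`v ↦ Q₁(v) + c₂(v)/(2v)` has derivative `c₁(v)`; in particular it is constant if
`c₁ ≡ 0`, and `Q₁` is conserved if moreover `c₂ ≡ 0`. -/
theorem conservation_law_charge_Q1
    {E : Type*} [NormedAddCommGroup E] [NormedSpace ℝ E] [CompleteSpace E]
    (φ φ' Ω ψ c₁ c₂ Q₁ : ℝ → E)
    (hφ : ∀ v ∈ Icc (1:ℝ) 2, HasDerivWithinAt φ (φ' v) (Icc (1:ℝ) 2) v)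
    (hΩ : ContinuousOn Ω (Icc (1:ℝ) 2))
    (hc₁ : ContinuousOn c₁ (Icc (1:ℝ) 2))
    (hc₂ : ContinuousOn c₂ (Icc (1:ℝ) 2))
    (hD1 : ∀ v ∈ Icc (1:ℝ) 2,
      HasDerivWithinAt (fun w => φ' w - (2:ℝ) • Ω w) (c₁ v) (Icc (1:ℝ) 2) v)
    (hD2 : ∀ v ∈ Icc (1:ℝ) 2,
      (2 * v) • φ' v - (2:ℝ) • φ v - (v ^ 2) • ψ v = c₂ v)
    (hQ₁ : ∀ v : ℝ, Q₁ v = (v / 2) • ψ v - (2:ℝ) • Ω v + v⁻¹ • φ v) :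
    (∀ v ∈ Icc (1:ℝ) 2,
      HasDerivWithinAt (fun w => Q₁ w + (2 * w)⁻¹ • c₂ w) (c₁ v) (Icc (1:ℝ) 2) v) ∧
    ((∀ v ∈ Icc (1:ℝ) 2, c₁ v = 0) →
      (∀ v ∈ Icc (1:ℝ) 2, ∀ w ∈ Icc (1:ℝ) 2,
        Q₁ v + (2 * v)⁻¹ • c₂ v = Q₁ w + (2 * w)⁻¹ • c₂ w) ∧
      ((∀ v ∈ Icc (1:ℝ) 2, c₂ v = 0) →
        ∀ v ∈ Icc (1:ℝ) 2, Q₁ v = Q₁ 1)) := by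
  have key : ∀ v ∈ Icc (1:ℝ) 2,
      Q₁ v + (2 * v)⁻¹ • c₂ v = φ' v - (2:ℝ) • Ω v := by
    intro v hv
    have hv0 : v ≠ 0 := by have := hv.1; linarith
    rw [hQ₁, ← hD2 v hv, smul_sub, smul_sub, smul_smul, smul_smul, smul_smul]
    have h1 : (2 * v)⁻¹ * (2 * v) = 1 := by field_simp
    have h2 : (2 * v)⁻¹ * 2 = v⁻¹ := by field_simp
    have h3 : (2 * v)⁻¹ * v ^ 2 = v / 2 := by field_simp
    rw [h1, h2, h3, one_smul]
    abel
  have hderiv : ∀ v ∈ Icc (1:ℝ) 2,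
      HasDerivWithinAt (fun w => Q₁ w + (2 * w)⁻¹ • c₂ w) (c₁ v) (Icc (1:ℝ) 2) v :=
    fun v hv => (hD1 v hv).congr key (key v hv)
  refine ⟨hderiv, fun h0 => ?_⟩
  have hconst : ∀ v ∈ Icc (1:ℝ) 2, ∀ w ∈ Icc (1:ℝ) 2,
      Q₁ v + (2 * v)⁻¹ • c₂ v = Q₁ w + (2 * w)⁻¹ • c₂ w := by
    intro v hv w hw
    have := (convex_Icc (1:ℝ) 2).norm_image_sub_le_of_norm_hasDerivWithin_le
      hderiv (C := 0) (fun x hx => by simp [h0 x hx]) hw hv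
    have hnorm : ‖(Q₁ v + (2 * v)⁻¹ • c₂ v) - (Q₁ w + (2 * w)⁻¹ • c₂ w)‖ ≤ 0 := by
      simpa using this
    have := norm_le_zero_iff.mp hnorm
    exact sub_eq_zero.mp this
  refine ⟨hconst, fun h2 v hv => ?_⟩
  have h1mem : (1:ℝ) ∈ Icc (1:ℝ) 2 := by constructor <;> norm_num
  have := hconst v hv 1 h1mem
  rw [h2 v hv, h2 1 h1mem] at this
  simpa using this
end

section
/- Let E be a real Banach space, let r(u) = 1 − u for u ∈ [−1,0], let φ, Ω, ψ̲ : [−1,0] → E with Ω continuous. Assume the homogeneous linearized first-variation equation (I1): u ↦ φ(u)/r(u) is differentiable on [−1,0] with derivative ψ̲(u)/2; and the homogeneous linearized Raychaudhuri equation (I2): u ↦ r(u)²·ψ̲(u) + 4r(u)·Ω(u) is differentiable on [−1,0] with derivative −4Ω(u). Then the ingoing charge Q̲₁(u) = (r(u)/2)·ψ̲(u) + 2Ω(u) − φ(u)/r(u) is constant on [−1,0]. -/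
open Set

/-- Conservation of the ingoing charge
`Q̲₁ = (r/2)((Ω tr χ̲)̇ + (4/r)Ω̇) − φ̇/r` along the ingoing null hypersurface
`{−1 ≤ u ≤ 0}` at Minkowski (area radius `r(u) = 1 − u`), from the homogeneous
linearized first-variation equation (I1) and the homogeneous linearized
Raychaudhuri equation (I2). -/
theorem conservation_law_ingoing_charge_Q1
    {E : Type*} [NormedAddCommGroup E] [NormedSpace ℝ E] [CompleteSpace E]
    (φ Ω ψb : ℝ → E)
    (hΩ : ContinuousOn Ω (Icc (-1:ℝ) 0))
    (hI1 : ∀ u ∈ Icc (-1:ℝ) 0,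
      HasDerivWithinAt (fun t => (1 - t)⁻¹ • φ t) ((1 / 2 : ℝ) • ψb u)
        (Icc (-1:ℝ) 0) u)
    (hI2 : ∀ u ∈ Icc (-1:ℝ) 0,
      HasDerivWithinAt (fun t => ((1 - t) ^ 2) • ψb t + (4 * (1 - t)) • Ω t)
        ((-4 : ℝ) • Ω u) (Icc (-1:ℝ) 0) u) :
    ∀ u ∈ Icc (-1:ℝ) 0, ∀ u' ∈ Icc (-1:ℝ) 0,
      ((1 - u) / 2) • ψb u + (2:ℝ) • Ω u - (1 - u)⁻¹ • φ u
        = ((1 - u') / 2) • ψb u' + (2:ℝ) • Ω u' - (1 - u')⁻¹ • φ u' := by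
  have hne : ∀ u ∈ Icc (-1:ℝ) 0, (1 - u) ≠ 0 := by
    intro u hu
    have := hu.2
    intro h; nlinarith
  set F : ℝ → E := fun t => ((1 - t) ^ 2) • ψb t + (4 * (1 - t)) • Ω t with hF
  set G : ℝ → E := fun t => (2 * (1 - t))⁻¹ • F t - (1 - t)⁻¹ • φ t with hG
  have hQeq : ∀ u ∈ Icc (-1:ℝ) 0,
      ((1 - u) / 2) • ψb u + (2:ℝ) • Ω u - (1 - u)⁻¹ • φ u = G u := by
    intro u hu
    have h := hne u hu
    simp only [hG, hF]
    match_scalars <;> field_simp <;> ring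
  -- derivative of G is 0 within Icc
  have hderiv : ∀ u ∈ Icc (-1:ℝ) 0, HasDerivWithinAt G 0 (Icc (-1:ℝ) 0) u := by
    intro u hu
    have h := hne u hu
    have h2 : (2 * (1 - u)) ≠ 0 := by simpa using h
    have hc : HasDerivAt (fun t : ℝ => (2 * (1 - t))⁻¹)
        (-(2 * (-1)) / (2 * (1 - u)) ^ 2) u := by
      exact (((hasDerivAt_id u).const_sub 1).const_mul 2).inv h2
    have hsmul := (hc.hasDerivWithinAt.smul (hI2 u hu)).sub (hI1 u hu)
    convert hsmul using 1
    · rfl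
    simp only [hF]
    match_scalars <;> field_simp <;> ring
  have hcont : ContinuousOn G (Icc (-1:ℝ) 0) := fun x hx =>
    (hderiv x hx).continuousWithinAt
  have hright : ∀ x ∈ Ico (-1:ℝ) 0, HasDerivWithinAt G 0 (Ici x) x := by
    intro x hx
    refine (hderiv x ⟨hx.1, hx.2.le⟩).mono_of_mem_nhdsWithin ?_
    exact Filter.mem_of_superset (Icc_mem_nhdsGE_of_mem ⟨le_refl x, hx.2⟩)
      (Icc_subset_Icc hx.1 le_rfl)
  have hconst := constant_of_has_deriv_right_zero hcont hright
  intro u hu u' hu'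
  rw [hQeq u hu, hQeq u' hu', hconst u hu, hconst u' hu']
end

section
/- The linear map from the real vector space of real polynomial functions of degree at most 6 to ℝ⁷ given by p ↦ ( p(1), p'(1), p''(1), p(2), p'(2), p''(2), ∫₁² p(v) dv ) is a linear isomorphism (equivalently, it is injective, hence bijective by dimension count). -/
set_option maxRecDepth 10000
set_option maxHeartbeats 1000000

open Polynomial MeasureTheory intervalIntegral

noncomputable def jmap : Polynomial.degreeLT ℝ 7 →ₗ[ℝ] (Fin 7 → ℝ) where
  toFun p := ![Polynomial.eval 1 (p : Polynomial ℝ),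
                Polynomial.eval 1 (Polynomial.derivative (p : Polynomial ℝ)),
                Polynomial.eval 1
                  (Polynomial.derivative (Polynomial.derivative (p : Polynomial ℝ))),
                Polynomial.eval 2 (p : Polynomial ℝ),
                Polynomial.eval 2 (Polynomial.derivative (p : Polynomial ℝ)),
                Polynomial.eval 2
                  (Polynomial.derivative (Polynomial.derivative (p : Polynomial ℝ))),
                ∫ v in (1:ℝ)..2, Polynomial.eval v (p : Polynomial ℝ)]
  map_add' p q := by
    have h1 : IntervalIntegrable (fun v => Polynomial.eval v (p : Polynomial ℝ))
        volume 1 2 := ((p : Polynomial ℝ).continuous_aeval).intervalIntegrable _ _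
    have h2 : IntervalIntegrable (fun v => Polynomial.eval v (q : Polynomial ℝ))
        volume 1 2 := ((q : Polynomial ℝ).continuous_aeval).intervalIntegrable _ _
    funext i
    fin_cases i <;>
      simp only [Submodule.coe_add, map_add, Polynomial.eval_add,
        intervalIntegral.integral_add h1 h2] <;> rfl
  map_smul' c p := by
    funext i
    fin_cases i <;>
      simp only [Submodule.coe_smul, Polynomial.derivative_smul, Polynomial.eval_smul,
        smul_eq_mul, RingHom.id_apply, intervalIntegral.integral_const_mul] <;> rfl

lemma jmap_apply (p : Polynomial.degreeLT ℝ 7) :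
    jmap p = ![Polynomial.eval 1 (p : Polynomial ℝ),
                Polynomial.eval 1 (Polynomial.derivative (p : Polynomial ℝ)),
                Polynomial.eval 1
                  (Polynomial.derivative (Polynomial.derivative (p : Polynomial ℝ))),
                Polynomial.eval 2 (p : Polynomial ℝ),
                Polynomial.eval 2 (Polynomial.derivative (p : Polynomial ℝ)),
                Polynomial.eval 2
                  (Polynomial.derivative (Polynomial.derivative (p : Polynomial ℝ))),
                ∫ v in (1:ℝ)..2, Polynomial.eval v (p : Polynomial ℝ)] := rfl

noncomputable def jbasis : Module.Basis (Fin 7) ℝ (Polynomial.degreeLT ℝ 7) :=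
  Module.Basis.ofEquivFun (Polynomial.degreeLTEquiv ℝ 7)

lemma coe_jbasis (j : Fin 7) : ((jbasis j : Polynomial.degreeLT ℝ 7) : Polynomial ℝ)
    = Polynomial.X ^ (j : ℕ) := by
  simp only [jbasis, Module.Basis.coe_ofEquivFun, Polynomial.degreeLTEquiv,
    LinearEquiv.coe_symm_mk]
  rw [Finset.sum_eq_single j (fun b _ hb => by simp [Pi.single_apply, hb]) (by simp)]
  simp [Polynomial.X_pow_eq_monomial]

noncomputable def Mmat : Matrix (Fin 7) (Fin 7) ℝ :=
  !![1, 1, 1, 1, 1, 1, 1;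
     0, 1, 2, 3, 4, 5, 6;
     0, 0, 2, 6, 12, 20, 30;
     1, 2, 4, 8, 16, 32, 64;
     0, 1, 4, 12, 32, 80, 192;
     0, 0, 2, 12, 48, 160, 480;
     1, 3/2, 7/3, 15/4, 31/5, 63/6, 127/7]

noncomputable def Nmat : Matrix (Fin 7) (Fin 7) ℝ :=
  !![592, 128, 40/3, 529, -98, 22/3, -1120;
     -2640, -568, -56, -2400, 449, -34, 5040;
     4800, 1020, 96, 4440, -840, 129/2, -9240;
     -4540, -950, -86, -4280, 820, -64, 8820;
     2355, 485, 85/2, 2265, -440, 35, -4620;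
     -636, -129, -11, -624, 123, -10, 1260;
     70, 14, 7/6, 70, -14, 7/6, -140]

lemma MN : Mmat * Nmat = 1 := by
  ext i j
  fin_cases i <;> fin_cases j <;>
    norm_num [Mmat, Nmat, Matrix.mul_apply, Fin.sum_univ_succ, Matrix.one_apply, Fin.ext_iff]

lemma NM : Nmat * Mmat = 1 := by
  ext i j
  fin_cases i <;> fin_cases j <;>
    norm_num [Mmat, Nmat, Matrix.mul_apply, Fin.sum_univ_succ, Matrix.one_apply, Fin.ext_iff]

lemma isUnit_Mmat_det : IsUnit Mmat.det :=
  (Matrix.isUnit_iff_isUnit_det Mmat).mp ⟨⟨Mmat, Nmat, MN, NM⟩, rfl⟩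

lemma jmap_matrix : LinearMap.toMatrix jbasis (Pi.basisFun ℝ (Fin 7)) jmap = Mmat := by
  ext i j
  rw [LinearMap.toMatrix_apply, Pi.basisFun_repr, jmap_apply, coe_jbasis]
  fin_cases j <;> fin_cases i <;>
    simp only [Matrix.cons_val_zero', Matrix.cons_val_succ', Matrix.cons_val_zero,
      Matrix.cons_val_succ, Mmat, Matrix.of_apply] <;>
    norm_num [Polynomial.derivative_X_pow, integral_pow]

noncomputable def gmap : (Fin 7 → ℝ) →ₗ[ℝ] Polynomial.degreeLT ℝ 7 :=
  Matrix.toLin (Pi.basisFun ℝ (Fin 7)) jbasis Nmat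

lemma hf : Matrix.toLin jbasis (Pi.basisFun ℝ (Fin 7)) Mmat = jmap := by
  rw [← jmap_matrix, Matrix.toLin_toMatrix]

lemma h1 : jmap ∘ₗ gmap = LinearMap.id := by
  rw [← hf, gmap, ← Matrix.toLin_mul, MN, Matrix.toLin_one]

lemma h2 : gmap ∘ₗ jmap = LinearMap.id := by
  rw [← hf, gmap, ← Matrix.toLin_mul, NM, Matrix.toLin_one]

/-- The linear map sending a real polynomial of degree at most `6` to its 2-jets
at `1` and `2` together with its integral over `[1,2]` is a linear isomorphism
onto `ℝ⁷`. -/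
theorem jets_and_integral_linear_iso :
    ∃ L : Polynomial.degreeLT ℝ 7 ≃ₗ[ℝ] (Fin 7 → ℝ),
      ∀ p : Polynomial.degreeLT ℝ 7,
        L p = ![Polynomial.eval 1 (p : Polynomial ℝ),
                Polynomial.eval 1 (Polynomial.derivative (p : Polynomial ℝ)),
                Polynomial.eval 1
                  (Polynomial.derivative (Polynomial.derivative (p : Polynomial ℝ))),
                Polynomial.eval 2 (p : Polynomial ℝ),
                Polynomial.eval 2 (Polynomial.derivative (p : Polynomial ℝ)),
                Polynomial.eval 2
                  (Polynomial.derivative (Polynomial.derivative (p : Polynomial ℝ))),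
                ∫ v in (1:ℝ)..2, Polynomial.eval v (p : Polynomial ℝ)] := by
  exact ⟨LinearEquiv.ofLinear jmap gmap h1 h2, fun p => jmap_apply p⟩
end

section
/- The linear map from the real vector space of real polynomial functions of degree at most 7 to ℝ⁸ given by p ↦ ( p(1), p(2), p'(1), p'(2), ∫₁² p(v) dv, ∫₁² p(v)/v² dv, ∫₁² p(v)/v³ dv, ∫₁² p(v)/v⁴ dv ) is a linear isomorphism (equivalently, it is injective, hence bijective by dimension count). -/
open Polynomial MeasureTheory intervalIntegral

namespace RadialWeights

@[simp] lemma cons_val_five {α : Type*} {m : ℕ} (x : α)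
    (u : Fin m.succ.succ.succ.succ.succ → α) :
    Matrix.vecCons x u 5 =
      Matrix.vecHead (Matrix.vecTail (Matrix.vecTail (Matrix.vecTail (Matrix.vecTail u)))) :=
  rfl

@[simp] lemma cons_val_six {α : Type*} {m : ℕ} (x : α)
    (u : Fin m.succ.succ.succ.succ.succ.succ → α) :
    Matrix.vecCons x u 6 =
      Matrix.vecHead (Matrix.vecTail (Matrix.vecTail (Matrix.vecTail
        (Matrix.vecTail (Matrix.vecTail u))))) :=
  rfl

@[simp] lemma cons_val_seven {α : Type*} {m : ℕ} (x : α)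
    (u : Fin m.succ.succ.succ.succ.succ.succ.succ → α) :
    Matrix.vecCons x u 7 =
      Matrix.vecHead (Matrix.vecTail (Matrix.vecTail (Matrix.vecTail
        (Matrix.vecTail (Matrix.vecTail (Matrix.vecTail u)))))) :=
  rfl

/-- value of `∫₁² v^i / v^k dv` when the exponent difference is not `-1`. -/
lemma Jpow (i k : ℕ) (h : (i : ℤ) - k ≠ -1) :
    ∫ v in (1:ℝ)..2, v ^ i / v ^ k = (2 ^ ((i : ℤ) - k + 1) - 1) / ((i : ℤ) - k + 1) := by
  have h0 : (0:ℝ) ∉ Set.uIcc (1:ℝ) 2 := by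
    rw [Set.uIcc_of_le (by norm_num : (1:ℝ) ≤ 2)]
    norm_num
  have heq : Set.EqOn (fun v : ℝ => v ^ i / v ^ k) (fun v : ℝ => v ^ ((i : ℤ) - k))
      (Set.uIcc (1:ℝ) 2) := by
    intro v hv
    rw [Set.uIcc_of_le (by norm_num : (1:ℝ) ≤ 2)] at hv
    have hv0 : v ≠ 0 := by
      have := hv.1; intro hc; rw [hc] at this; norm_num at this
    simp only [zpow_sub₀ hv0, zpow_natCast]
  rw [intervalIntegral.integral_congr heq, integral_zpow (Or.inr ⟨h, h0⟩)]
  rw [one_zpow]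
  push_cast
  ring

/-- value of `∫₁² v^i / v^(i+1) dv`. -/
lemma Jlog (i : ℕ) : ∫ v in (1:ℝ)..2, v ^ i / v ^ (i + 1) = Real.log 2 := by
  have heq : Set.EqOn (fun v : ℝ => v ^ i / v ^ (i + 1)) (fun v : ℝ => v⁻¹)
      (Set.uIcc (1:ℝ) 2) := by
    intro v hv
    rw [Set.uIcc_of_le (by norm_num : (1:ℝ) ≤ 2)] at hv
    have hv0 : v ≠ 0 := by
      have := hv.1; intro hc; rw [hc] at this; norm_num at this
    have hp : v ^ i ≠ 0 := pow_ne_zero _ hv0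
    field_simp [pow_succ]
    ring
  rw [intervalIntegral.integral_congr heq, integral_inv_of_pos one_pos two_pos]
  norm_num

lemma int_expand (p : ℝ[X]) (hp : p.natDegree < 8) (k : ℕ) :
    ∫ v in (1:ℝ)..2, p.eval v / v ^ k
      = ∑ i ∈ Finset.range 8, p.coeff i * ∫ v in (1:ℝ)..2, (v:ℝ) ^ i / v ^ k := by
  have hInt : ∀ i : ℕ, IntervalIntegrable (fun v : ℝ => p.coeff i * (v ^ i / v ^ k))
      volume 1 2 := by
    intro i
    apply ContinuousOn.intervalIntegrable
    apply ContinuousOn.mul continuousOn_const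
    apply ContinuousOn.div (continuous_pow i).continuousOn (continuous_pow k).continuousOn
    intro v hv
    rw [Set.uIcc_of_le (by norm_num : (1:ℝ) ≤ 2)] at hv
    have : (1:ℝ) ≤ v := hv.1
    exact pow_ne_zero _ (by linarith)
  calc ∫ v in (1:ℝ)..2, p.eval v / v ^ k
      = ∫ v in (1:ℝ)..2, ∑ i ∈ Finset.range 8, p.coeff i * (v ^ i / v ^ k) := by
        apply intervalIntegral.integral_congr
        intro v _
        simp only [Polynomial.eval_eq_sum_range' hp, Finset.sum_div, mul_div_assoc]
    _ = ∑ i ∈ Finset.range 8, ∫ v in (1:ℝ)..2, p.coeff i * (v ^ i / v ^ k) :=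
        intervalIntegral.integral_finset_sum (fun i _ => hInt i)
    _ = ∑ i ∈ Finset.range 8, p.coeff i * ∫ v in (1:ℝ)..2, (v:ℝ) ^ i / v ^ k := by
        simp [intervalIntegral.integral_const_mul]

lemma eval_expand (p : ℝ[X]) (hp : p.natDegree < 8) (x : ℝ) :
    p.eval x = p.coeff 0 + p.coeff 1 * x + p.coeff 2 * x ^ 2 + p.coeff 3 * x ^ 3
      + p.coeff 4 * x ^ 4 + p.coeff 5 * x ^ 5 + p.coeff 6 * x ^ 6 + p.coeff 7 * x ^ 7 := by
  rw [Polynomial.eval_eq_sum_range' hp]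
  simp [Finset.sum_range_succ]

lemma deriv_expand (p : ℝ[X]) (hp : p.natDegree < 8) (x : ℝ) :
    (derivative p).eval x = p.coeff 1 + 2 * p.coeff 2 * x + 3 * p.coeff 3 * x ^ 2
      + 4 * p.coeff 4 * x ^ 3 + 5 * p.coeff 5 * x ^ 4 + 6 * p.coeff 6 * x ^ 5
      + 7 * p.coeff 7 * x ^ 6 := by
  have h7 : (derivative p).natDegree < 7 :=
    lt_of_le_of_lt (Polynomial.natDegree_derivative_le p) (by omega)
  rw [Polynomial.eval_eq_sum_range' h7]
  simp [Finset.sum_range_succ, Polynomial.coeff_derivative]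
  norm_num
  ring

/-- the purely algebraic core: the 8×8 system has only the trivial solution. -/
lemma algCore (l c0 c1 c2 c3 c4 c5 c6 c7 : ℝ)
    (ha : 0.6931471803 < l) (hb : l < 0.6931471808)
    (h0 : c0 + c1 + c2 + c3 + c4 + c5 + c6 + c7 = 0)
    (h1 : c0 + 2*c1 + 4*c2 + 8*c3 + 16*c4 + 32*c5 + 64*c6 + 128*c7 = 0)
    (h2 : c1 + 2*c2 + 3*c3 + 4*c4 + 5*c5 + 6*c6 + 7*c7 = 0)
    (h3 : c1 + 4*c2 + 12*c3 + 32*c4 + 80*c5 + 192*c6 + 448*c7 = 0)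
    (h4 : c0 + (3/2)*c1 + (7/3)*c2 + (15/4)*c3 + (31/5)*c4 + (21/2)*c5 + (127/7)*c6
        + (255/8)*c7 = 0)
    (h5 : (1/2)*c0 + l*c1 + c2 + (3/2)*c3 + (7/3)*c4 + (15/4)*c5 + (31/5)*c6
        + (21/2)*c7 = 0)
    (h6 : (3/8)*c0 + (1/2)*c1 + l*c2 + c3 + (3/2)*c4 + (7/3)*c5 + (15/4)*c6
        + (31/5)*c7 = 0)
    (h7 : (7/24)*c0 + (3/8)*c1 + (1/2)*c2 + l*c3 + c4 + (3/2)*c5 + (7/3)*c6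
        + (15/4)*c7 = 0) :
    c0 = 0 ∧ c1 = 0 ∧ c2 = 0 ∧ c3 = 0 ∧ c4 = 0 ∧ c5 = 0 ∧ c6 = 0 ∧ c7 = 0 := by
  have hba : (0:ℝ) < 0.6931471808 - l := by linarith
  have hab : (0:ℝ) < l - 0.6931471803 := by linarith
  have hD : ((72403187/2016000) + (-234890567/1512000)*l + (627187/2800)*l^2 + (-3768/35)*l^3 : ℝ) ≠ 0 := by
    have hlt : ((72403187/2016000) + (-234890567/1512000)*l + (627187/2800)*l^2 + (-3768/35)*l^3 : ℝ) < 0 := by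
      nlinarith [mul_pos hba hab, mul_pos (mul_pos hba hba) hab, mul_pos (mul_pos hab hab) hba]
    exact ne_of_lt hlt
  have e0 : c0 = 0 := by
    have hm : ((72403187/2016000) + (-234890567/1512000)*l + (627187/2800)*l^2 + (-3768/35)*l^3 : ℝ) * c0 = 0 := by
      linear_combination ((-6049079/252000) + (18237917/189000)*l + (-202459/1575)*l^2 + (1984/35)*l^3 : ℝ) * h0 + ((-116831/4032) + (192997627/1512000)*l + (-4721813/25200)*l^2 + (3208/35)*l^3 : ℝ) * h1 + ((-1974293/63000) + (14557183/108000)*l + (-608707/3150)*l^2 + (3232/35)*l^3 : ℝ) * h2 + ((1237307/403200) + (-5080073/378000)*l + (123583/6300)*l^2 + (-334/35)*l^3 : ℝ) * h3 + ((27271/400) + (-287747/900)*l + (2484/5)*l^2 + (-256)*l^3 : ℝ) * h4 + ((247127/8400) + (-356431/4200)*l + (306/5)*l^2 : ℝ) * h5 + ((2311/175) + (-2287/60)*l + (2888/105)*l^2 : ℝ) * h6 + ((303817/84000) + (-16453/1575)*l + (264/35)*l^2 : ℝ) * h7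
    exact (mul_eq_zero.mp hm).resolve_left hD
  have e1 : c1 = 0 := by
    have hm : ((72403187/2016000) + (-234890567/1512000)*l + (627187/2800)*l^2 + (-3768/35)*l^3 : ℝ) * c1 = 0 := by
      linear_combination ((1362769/252000) + (-196619/12600)*l + (394/35)*l^2 : ℝ) * h0 + ((-3708679/2016000) + (4777/900)*l + (-134/35)*l^2 : ℝ) * h1 + ((2627497/4536000) + (-421199/252000)*l + (211/175)*l^2 : ℝ) * h2 + ((18511/141750) + (-189901/504000)*l + (761/2800)*l^2 : ℝ) * h3 + ((240859/10800) + (-19301/300)*l + (232/5)*l^2 : ℝ) * h4 + ((-1957097/37800) + (41809/280)*l + (-3768/35)*l^2 : ℝ) * h5 + ((89/2520) + (-107/2100)*l : ℝ) * h6 + ((3743/252000) + (-3/140)*l : ℝ) * h7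
    exact (mul_eq_zero.mp hm).resolve_left hD
  have e2 : c2 = 0 := by
    have hm : ((72403187/2016000) + (-234890567/1512000)*l + (627187/2800)*l^2 + (-3768/35)*l^3 : ℝ) * c2 = 0 := by
      linear_combination ((2071021/336000) + (-896339/50400)*l + (449/35)*l^2 : ℝ) * h0 + ((-4722841/2688000) + (204413/40320)*l + (-128/35)*l^2 : ℝ) * h1 + ((52697/84000) + (-1824601/1008000)*l + (457/350)*l^2 : ℝ) * h2 + ((343379/2688000) + (-371549/1008000)*l + (1489/5600)*l^2 : ℝ) * h3 + ((71929/4800) + (-155683/3600)*l + (156/5)*l^2 : ℝ) * h4 + ((89/2240) + (-321/5600)*l : ℝ) * h5 + ((-5799/112) + (418097/2800)*l + (-3768/35)*l^2 : ℝ) * h6 + ((1719/112000) + (-31/1400)*l : ℝ) * h7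
    exact (mul_eq_zero.mp hm).resolve_left hD
  have e3 : c3 = 0 := by
    have hm : ((72403187/2016000) + (-234890567/1512000)*l + (627187/2800)*l^2 + (-3768/35)*l^3 : ℝ) * c3 = 0 := by
      linear_combination ((1600799/252000) + (-1385543/75600)*l + (1388/105)*l^2 : ℝ) * h0 + ((-6105593/4032000) + (2642803/604800)*l + (-331/105)*l^2 : ℝ) * h1 + ((3708679/6048000) + (-4777/2700)*l + (134/105)*l^2 : ℝ) * h2 + ((1362769/12096000) + (-196619/604800)*l + (197/840)*l^2 : ℝ) * h3 + ((36859/3600) + (-3547/120)*l + (64/3)*l^2 : ℝ) * h4 + ((3743/100800) + (-3/56)*l : ℝ) * h5 + ((191/5600) + (-31/630)*l : ℝ) * h6 + ((-8702243/168000) + (59741/400)*l + (-3768/35)*l^2 : ℝ) * h7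
    exact (mul_eq_zero.mp hm).resolve_left hD
  have e4 : c4 = 0 := by
    have hm : ((72403187/2016000) + (-234890567/1512000)*l + (627187/2800)*l^2 + (-3768/35)*l^3 : ℝ) * c4 = 0 := by
      linear_combination ((84585461/134400) + (-280099859/100800)*l + (6867941/1680)*l^2 + (-2004)*l^3 : ℝ) * h0 + ((223326737/537600) + (-718075853/403200)*l + (2137649/840)*l^2 + (-1212)*l^3 : ℝ) * h1 + ((13787491/57600) + (-629670001/604800)*l + (1014325/672)*l^2 + (-5106/7)*l^3 : ℝ) * h2 + ((-73040287/1612800) + (6730093/34560)*l + (-33493/120)*l^2 + (7467/56)*l^3 : ℝ) * h3 + ((-5635567/4800) + (8879101/1800)*l + (-138041/20)*l^2 + (3216)*l^3 : ℝ) * h4 + ((129089/1344) + (-310531/1120)*l + (11205/56)*l^2 : ℝ) * h5 + ((58867/448) + (-159241/420)*l + (547/2)*l^2 : ℝ) * h6 + ((2458139/22400) + (-1063457/3360)*l + (3195/14)*l^2 : ℝ) * h7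
    exact (mul_eq_zero.mp hm).resolve_left hD
  have e5 : c5 = 0 := by
    have hm : ((72403187/2016000) + (-234890567/1512000)*l + (627187/2800)*l^2 + (-3768/35)*l^3 : ℝ) * c5 = 0 := by
      linear_combination ((-181743343/168000) + (596995711/126000)*l + (-14524109/2100)*l^2 + (16824/5)*l^3 : ℝ) * h0 + ((-96058261/134400) + (387406499/126000)*l + (-18516937/4200)*l^2 + (10536/5)*l^3 : ℝ) * h1 + ((-369939701/1008000) + (100389689/63000)*l + (-1383733/600)*l^2 + (7788/7)*l^3 : ℝ) * h2 + ((161526931/2016000) + (-174056693/504000)*l + (4167893/8400)*l^2 + (-33267/140)*l^3 : ℝ) * h3 + ((464683/240) + (-821569/100)*l + (174236/15)*l^2 + (-5472)*l^3 : ℝ) * h4 + ((-3971651/33600) + (955221/2800)*l + (-4923/20)*l^2 : ℝ) * h5 + ((-1211831/8400) + (1311199/3150)*l + (-10509/35)*l^2 : ℝ) * h6 + ((-2539469/28000) + (183129/700)*l + (-6603/35)*l^2 : ℝ) * h7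
    exact (mul_eq_zero.mp hm).resolve_left hD
  have e6 : c6 = 0 := by
    have hm : ((72403187/2016000) + (-234890567/1512000)*l + (627187/2800)*l^2 + (-3768/35)*l^3 : ℝ) * c6 = 0 := by
      linear_combination ((17461373/28800) + (-14293217/5400)*l + (138655/36)*l^2 + (-1868)*l^3 : ℝ) * h0 + ((47451683/115200) + (-306662131/172800)*l + (1834999/720)*l^2 + (-1220)*l^3 : ℝ) * h1 + ((5480507/28800) + (-557297/675)*l + (8596987/7200)*l^2 + (-2878/5)*l^3 : ℝ) * h2 + ((-171847/3600) + (35591831/172800)*l + (-2132951/7200)*l^2 + (5681/40)*l^3 : ℝ) * h3 + ((-17233/16) + (3305801/720)*l + (-130453/20)*l^2 + (3088)*l^3 : ℝ) * h4 + ((3947/75) + (-182251/1200)*l + (4383/40)*l^2 : ℝ) * h5 + ((19337/320) + (-8369/48)*l + (3773/30)*l^2 : ℝ) * h6 + ((81331/2400) + (-703849/7200)*l + (141/2)*l^2 : ℝ) * h7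
    exact (mul_eq_zero.mp hm).resolve_left hD
  have e7 : c7 = 0 := by
    have hm : ((72403187/2016000) + (-234890567/1512000)*l + (627187/2800)*l^2 + (-3768/35)*l^3 : ℝ) * c7 = 0 := by
      linear_combination ((-5637419/50400) + (767762/1575)*l + (-148703/210)*l^2 + (2400/7)*l^3 : ℝ) * h0 + ((-4522477/57600) + (1365079/4032)*l + (-102191/210)*l^2 + (1632/7)*l^3 : ℝ) * h1 + ((-12025733/362880) + (271633/1890)*l + (-109076/525)*l^2 + (3504/35)*l^3 : ℝ) * h2 + ((34331909/3628800) + (-12352229/302400)*l + (123449/2100)*l^2 + (-141/5)*l^3 : ℝ) * h3 + ((860789/4320) + (-34067/40)*l + (36397/30)*l^2 + (-576)*l^3 : ℝ) * h4 + ((-35393/4320) + (331/14)*l + (-597/35)*l^2 : ℝ) * h5 + ((-228323/25200) + (5882/225)*l + (-132/7)*l^2 : ℝ) * h6 + ((-240859/50400) + (19301/1400)*l + (-348/35)*l^2 : ℝ) * h7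
    exact (mul_eq_zero.mp hm).resolve_left hD
  exact ⟨e0, e1, e2, e3, e4, e5, e6, e7⟩

end RadialWeights

/-- Hierarchy of radial weights: the linear map sending a real polynomial of
degree at most `7` to its boundary values and first derivatives at `1` and `2`
together with the four radially weighted integrals `∫₁² p(v)/v^k dv` for
`k = 0, 2, 3, 4` is a linear isomorphism onto `ℝ⁸`. -/
theorem radial_weights_linear_iso :
    ∃ L : Polynomial.degreeLT ℝ 8 ≃ₗ[ℝ] (Fin 8 → ℝ),
      ∀ p : Polynomial.degreeLT ℝ 8,
        L p = ![Polynomial.eval 1 (p : Polynomial ℝ),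
                Polynomial.eval 2 (p : Polynomial ℝ),
                Polynomial.eval 1 (Polynomial.derivative (p : Polynomial ℝ)),
                Polynomial.eval 2 (Polynomial.derivative (p : Polynomial ℝ)),
                ∫ v in (1:ℝ)..2, Polynomial.eval v (p : Polynomial ℝ),
                ∫ v in (1:ℝ)..2, Polynomial.eval v (p : Polynomial ℝ) / v ^ 2,
                ∫ v in (1:ℝ)..2, Polynomial.eval v (p : Polynomial ℝ) / v ^ 3,
                ∫ v in (1:ℝ)..2, Polynomial.eval v (p : Polynomial ℝ) / v ^ 4] := by
  classical
  have hFD : FiniteDimensional ℝ (Polynomial.degreeLT ℝ 8) :=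
    (Polynomial.degreeLTEquiv ℝ 8).symm.finiteDimensional
  -- the matrix of the map in the coefficient basis
  set M : Matrix (Fin 8) (Fin 8) ℝ :=
    !![1, 1, 1, 1, 1, 1, 1, 1;
       1, 2, 4, 8, 16, 32, 64, 128;
       0, 1, 2, 3, 4, 5, 6, 7;
       0, 1, 4, 12, 32, 80, 192, 448;
       1, 3/2, 7/3, 15/4, 31/5, 21/2, 127/7, 255/8;
       1/2, Real.log 2, 1, 3/2, 7/3, 15/4, 31/5, 21/2;
       3/8, 1/2, Real.log 2, 1, 3/2, 7/3, 15/4, 31/5;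
       7/24, 3/8, 1/2, Real.log 2, 1, 3/2, 7/3, 15/4] with hM
  set Lmap : Polynomial.degreeLT ℝ 8 →ₗ[ℝ] (Fin 8 → ℝ) :=
    (Matrix.toLin' M).comp (Polynomial.degreeLTEquiv ℝ 8).toLinearMap with hLmap
  have hnat : ∀ p : Polynomial.degreeLT ℝ 8, (p : ℝ[X]).natDegree < 8 := by
    intro p
    have hd := Polynomial.mem_degreeLT.mp p.2
    rcases eq_or_ne (p : ℝ[X]) 0 with h | h
    · simp [h]
    · exact (Polynomial.natDegree_lt_iff_degree_lt h).mpr hd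
  have hinj : Function.Injective Lmap := by
    rw [injective_iff_map_eq_zero]
    intro p hp
    have h0 := congrFun hp 0
    have h1 := congrFun hp 1
    have h2 := congrFun hp 2
    have h3 := congrFun hp 3
    have h4 := congrFun hp 4
    have h5 := congrFun hp 5
    have h6 := congrFun hp 6
    have h7 := congrFun hp 7
    have hcc : ∀ j : Fin 8, (Polynomial.degreeLTEquiv ℝ 8) p j = (p : ℝ[X]).coeff j :=
      fun _ => rfl
    simp [hLmap, hM, Matrix.toLin'_apply, Matrix.mulVec, dotProduct,
      Fin.sum_univ_succ, hcc, Fin.val_succ] at h0 h1 h2 h3 h4 h5 h6 h7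
    obtain ⟨e0, e1, e2, e3, e4, e5, e6, e7⟩ :=
      RadialWeights.algCore (Real.log 2)
        ((p : ℝ[X]).coeff 0) ((p : ℝ[X]).coeff 1) ((p : ℝ[X]).coeff 2) ((p : ℝ[X]).coeff 3)
        ((p : ℝ[X]).coeff 4) ((p : ℝ[X]).coeff 5) ((p : ℝ[X]).coeff 6) ((p : ℝ[X]).coeff 7)
        Real.log_two_gt_d9 Real.log_two_lt_d9
        (by linear_combination h0) (by linear_combination h1) (by linear_combination h2)
        (by linear_combination h3) (by linear_combination h4) (by linear_combination h5)
        (by linear_combination h6) (by linear_combination h7)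
    have hz : (p : ℝ[X]) = 0 := by
      apply Polynomial.ext
      intro n
      simp only [Polynomial.coeff_zero]
      rcases lt_or_ge n 8 with hn | hn
      · interval_cases n <;> assumption
      · exact Polynomial.coeff_eq_zero_of_natDegree_lt (lt_of_lt_of_le (hnat p) hn)
    exact Subtype.ext hz
  have hrank : Module.finrank ℝ (Polynomial.degreeLT ℝ 8)
      = Module.finrank ℝ (Fin 8 → ℝ) :=
    (Polynomial.degreeLTEquiv ℝ 8).finrank_eq
  refine ⟨LinearMap.linearEquivOfInjective Lmap hinj hrank, fun p => ?_⟩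
  rw [LinearMap.linearEquivOfInjective_apply]
  have hp := hnat p
  have hJ0 : (∫ v in (1:ℝ)..2, Polynomial.eval v (p : ℝ[X]))
      = (p : ℝ[X]).coeff 0 + (3/2) * (p : ℝ[X]).coeff 1 + (7/3) * (p : ℝ[X]).coeff 2
        + (15/4) * (p : ℝ[X]).coeff 3 + (31/5) * (p : ℝ[X]).coeff 4
        + (21/2) * (p : ℝ[X]).coeff 5 + (127/7) * (p : ℝ[X]).coeff 6
        + (255/8) * (p : ℝ[X]).coeff 7 := by
    have h : (∫ v in (1:ℝ)..2, Polynomial.eval v (p : ℝ[X]))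
        = ∫ v in (1:ℝ)..2, Polynomial.eval v (p : ℝ[X]) / v ^ (0:ℕ) := by simp
    rw [h, RadialWeights.int_expand _ hp 0]
    simp only [Finset.sum_range_succ, Finset.sum_range_zero]
    rw [RadialWeights.Jpow 0 0 (by norm_num), RadialWeights.Jpow 1 0 (by norm_num),
      RadialWeights.Jpow 2 0 (by norm_num), RadialWeights.Jpow 3 0 (by norm_num),
      RadialWeights.Jpow 4 0 (by norm_num), RadialWeights.Jpow 5 0 (by norm_num),
      RadialWeights.Jpow 6 0 (by norm_num), RadialWeights.Jpow 7 0 (by norm_num)]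
    norm_num
    ring
  have hJ2 : (∫ v in (1:ℝ)..2, Polynomial.eval v (p : ℝ[X]) / v ^ (2:ℕ))
      = (1/2) * (p : ℝ[X]).coeff 0 + Real.log 2 * (p : ℝ[X]).coeff 1 + (p : ℝ[X]).coeff 2
        + (3/2) * (p : ℝ[X]).coeff 3 + (7/3) * (p : ℝ[X]).coeff 4
        + (15/4) * (p : ℝ[X]).coeff 5 + (31/5) * (p : ℝ[X]).coeff 6
        + (21/2) * (p : ℝ[X]).coeff 7 := by
    rw [RadialWeights.int_expand _ hp 2]
    simp only [Finset.sum_range_succ, Finset.sum_range_zero]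
    have hl1 : ∫ v in (1:ℝ)..2, v ^ (1:ℕ) / v ^ (2:ℕ) = Real.log 2 := by
      simpa using RadialWeights.Jlog 1
    rw [RadialWeights.Jpow 0 2 (by norm_num), hl1,
      RadialWeights.Jpow 2 2 (by norm_num), RadialWeights.Jpow 3 2 (by norm_num),
      RadialWeights.Jpow 4 2 (by norm_num), RadialWeights.Jpow 5 2 (by norm_num),
      RadialWeights.Jpow 6 2 (by norm_num), RadialWeights.Jpow 7 2 (by norm_num)]
    norm_num
    ring
  have hJ3 : (∫ v in (1:ℝ)..2, Polynomial.eval v (p : ℝ[X]) / v ^ (3:ℕ))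
      = (3/8) * (p : ℝ[X]).coeff 0 + (1/2) * (p : ℝ[X]).coeff 1
        + Real.log 2 * (p : ℝ[X]).coeff 2 + (p : ℝ[X]).coeff 3
        + (3/2) * (p : ℝ[X]).coeff 4 + (7/3) * (p : ℝ[X]).coeff 5
        + (15/4) * (p : ℝ[X]).coeff 6 + (31/5) * (p : ℝ[X]).coeff 7 := by
    rw [RadialWeights.int_expand _ hp 3]
    simp only [Finset.sum_range_succ, Finset.sum_range_zero]
    have hl2 : ∫ v in (1:ℝ)..2, v ^ (2:ℕ) / v ^ (3:ℕ) = Real.log 2 := by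
      simpa using RadialWeights.Jlog 2
    rw [RadialWeights.Jpow 0 3 (by norm_num), RadialWeights.Jpow 1 3 (by norm_num),
      hl2,
      RadialWeights.Jpow 3 3 (by norm_num), RadialWeights.Jpow 4 3 (by norm_num),
      RadialWeights.Jpow 5 3 (by norm_num), RadialWeights.Jpow 6 3 (by norm_num),
      RadialWeights.Jpow 7 3 (by norm_num)]
    norm_num
    ring
  have hJ4 : (∫ v in (1:ℝ)..2, Polynomial.eval v (p : ℝ[X]) / v ^ (4:ℕ))
      = (7/24) * (p : ℝ[X]).coeff 0 + (3/8) * (p : ℝ[X]).coeff 1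
        + (1/2) * (p : ℝ[X]).coeff 2 + Real.log 2 * (p : ℝ[X]).coeff 3
        + (p : ℝ[X]).coeff 4 + (3/2) * (p : ℝ[X]).coeff 5
        + (7/3) * (p : ℝ[X]).coeff 6 + (15/4) * (p : ℝ[X]).coeff 7 := by
    rw [RadialWeights.int_expand _ hp 4]
    simp only [Finset.sum_range_succ, Finset.sum_range_zero]
    have hl3 : ∫ v in (1:ℝ)..2, v ^ (3:ℕ) / v ^ (4:ℕ) = Real.log 2 := by
      simpa using RadialWeights.Jlog 3
    rw [RadialWeights.Jpow 0 4 (by norm_num), RadialWeights.Jpow 1 4 (by norm_num),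
      RadialWeights.Jpow 2 4 (by norm_num), hl3,
      RadialWeights.Jpow 4 4 (by norm_num), RadialWeights.Jpow 5 4 (by norm_num),
      RadialWeights.Jpow 6 4 (by norm_num), RadialWeights.Jpow 7 4 (by norm_num)]
    norm_num
    ring
  funext i
  have hcc : ∀ j : Fin 8, (Polynomial.degreeLTEquiv ℝ 8) p j = (p : ℝ[X]).coeff j :=
    fun _ => rfl
  fin_cases i <;>
    simp [hLmap, hM, Matrix.toLin'_apply, Matrix.mulVec, dotProduct,
      Fin.sum_univ_succ, hcc, Fin.val_succ]
  · rw [RadialWeights.eval_expand _ hp 1]; norm_num; ring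
  · rw [RadialWeights.eval_expand _ hp 2]; norm_num; ring
  · rw [RadialWeights.deriv_expand _ hp 1]; norm_num; ring
  · rw [RadialWeights.deriv_expand _ hp 2]; norm_num; ring
  · rw [hJ0]; norm_num; ring
  · rw [hJ2]; norm_num; ring
  · rw [hJ3]; norm_num; ring
  · rw [hJ4]; norm_num; ring
end

section
/- There exists a universal constant C > 0 with the following property: for every real Banach space E, all φ₁, ψ₁, c, a ∈ E and every continuous c₁ : [1,2] → E, there exists an infinitely differentiable function Ω : [1,2] → E with Ω(1) = 0 and sup_{1 ≤ v ≤ 2} ‖Ω(v)‖ ≤ C·( ‖φ₁‖ + ‖ψ₁‖ + ‖c‖ + ‖a‖ + sup_{1 ≤ v ≤ 2} ‖c₁(v)‖ ), such that every differentiable φ : [1,2] → E satisfying (D1) (i.e. v ↦ φ'(v) − 2Ω(v) is differentiable with derivative c₁(v)) together with the initial conditions φ(1) = φ₁ and φ'(1) = (ψ₁ + 2φ₁ + c)/2 satisfies φ(2) = a. -/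
open Set MeasureTheory

/-- Gluing step for the linearized conformal factor: there is a universal
constant `C > 0` such that, given the data `φ₁, ψ₁, c, a` and a continuous
source `c₁`, one can choose a smooth linearized lapse `Ω` with `Ω(1) = 0` and
norm bounded by `C` times the data, such that every solution `φ` of the first
linearized constraint (D1) with initial conditions `φ(1) = φ₁`,
`φ'(1) = (ψ₁ + 2φ₁ + c)/2` satisfies `φ(2) = a`. -/
theorem gluing_linearized_conformal_factor :
    ∃ C : ℝ, 0 < C ∧
      ∀ (E : Type*) [NormedAddCommGroup E] [NormedSpace ℝ E] [CompleteSpace E],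
        ∀ (φ₁ ψ₁ c a : E) (c₁ : ℝ → E), ContinuousOn c₁ (Icc (1:ℝ) 2) →
          ∃ Ω : ℝ → E, ContDiff ℝ (⊤ : ℕ∞) Ω ∧ Ω 1 = 0 ∧
            (∀ v ∈ Icc (1:ℝ) 2,
              ‖Ω v‖ ≤ C * (‖φ₁‖ + ‖ψ₁‖ + ‖c‖ + ‖a‖ +
                ⨆ w : Icc (1:ℝ) 2, ‖c₁ (w : ℝ)‖)) ∧
            ∀ φ φ' : ℝ → E,
              (∀ v ∈ Icc (1:ℝ) 2, HasDerivWithinAt φ (φ' v) (Icc (1:ℝ) 2) v) →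
              (∀ v ∈ Icc (1:ℝ) 2,
                HasDerivWithinAt (fun w => φ' w - (2:ℝ) • Ω w) (c₁ v)
                  (Icc (1:ℝ) 2) v) →
              φ 1 = φ₁ → φ' 1 = (2:ℝ)⁻¹ • (ψ₁ + (2:ℝ) • φ₁ + c) →
              φ 2 = a := by
  refine ⟨2, by norm_num, ?_⟩
  intro E _ _ _ φ₁ ψ₁ c a c₁ hc₁
  set M : ℝ := ⨆ w : Icc (1:ℝ) 2, ‖c₁ (w:ℝ)‖ with hMdef
  have hMbdd : BddAbove (Set.range fun w : Icc (1:ℝ) 2 => ‖c₁ (w:ℝ)‖) := by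
    have hcr : Continuous fun w : Icc (1:ℝ) 2 => ‖c₁ (w:ℝ)‖ :=
      (continuousOn_iff_continuous_restrict.mp hc₁).norm
    exact (isCompact_range hcr).bddAbove
  have hle : ∀ t ∈ Icc (1:ℝ) 2, ‖c₁ t‖ ≤ M := fun t ht => le_ciSup hMbdd ⟨t, ht⟩
  have hM0 : 0 ≤ M := le_trans (norm_nonneg _) (hle 1 (by norm_num))
  set P1 : E := (2:ℝ)⁻¹ • (ψ₁ + (2:ℝ) • φ₁ + c) with hP1
  have hc₁int : ∀ v ∈ Icc (1:ℝ) 2, IntervalIntegrable c₁ volume 1 v := by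
    intro v hv
    apply ContinuousOn.intervalIntegrable
    rw [uIcc_of_le hv.1]
    exact hc₁.mono (Icc_subset_Icc_right hv.2)
  set Pc : ℝ → E := fun v => ∫ t in (1:ℝ)..v, c₁ t with hPc
  have hPcCont : ContinuousOn Pc (Icc (1:ℝ) 2) := by
    have := intervalIntegral.continuousOn_primitive_interval (f := c₁) (μ := volume) (a := 1) (b := 2) ?_
    · rwa [uIcc_of_le (by norm_num : (1:ℝ) ≤ 2)] at this
    · rw [uIcc_of_le (by norm_num : (1:ℝ) ≤ 2)]
      exact hc₁.integrableOn_compact isCompact_Icc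
  have hPcnorm : ∀ v ∈ Icc (1:ℝ) 2, ‖Pc v‖ ≤ M := by
    intro v hv
    have h := intervalIntegral.norm_integral_le_of_norm_le_const
      (C := M) (f := c₁) (a := 1) (b := v) ?_
    · calc ‖Pc v‖ ≤ M * |v - 1| := h
        _ ≤ M * 1 := by
            apply mul_le_mul_of_nonneg_left _ hM0
            rw [abs_of_nonneg (by linarith [hv.1])]; linarith [hv.2]
        _ = M := mul_one M
    · intro t ht
      rw [uIoc_of_le hv.1] at ht
      exact hle t ⟨le_of_lt ht.1, le_trans ht.2 hv.2⟩
  set I : E := ∫ v in (1:ℝ)..2, Pc v with hI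
  have hInorm : ‖I‖ ≤ M := by
    have h := intervalIntegral.norm_integral_le_of_norm_le_const
      (C := M) (f := Pc) (a := 1) (b := 2) ?_
    · calc ‖I‖ ≤ M * |(2:ℝ) - 1| := h
        _ = M := by norm_num
    · intro t ht
      rw [uIoc_of_le (by norm_num : (1:ℝ) ≤ 2)] at ht
      exact hPcnorm t ⟨le_of_lt ht.1, ht.2⟩
  set b : E := (2:ℝ)⁻¹ • (a - φ₁ - P1 - I) with hb
  set g : ℝ → ℝ := fun v => 6*(v-1)*(2-v) with hgdef
  have hgderiv : ∀ t : ℝ, HasDerivAt (fun t : ℝ => -2*t^3+9*t^2-12*t) (g t) t := by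
    intro t
    have h := (((hasDerivAt_pow 3 t).const_mul (-2:ℝ)).add
      ((hasDerivAt_pow 2 t).const_mul (9:ℝ))).sub ((hasDerivAt_id t).const_mul (12:ℝ))
    have h1 : (fun x : ℝ => -2*x^3+9*x^2-12*x) = fun x : ℝ => -2*x^3 + 9*x^2 - 12*(id x) := by
      funext x; simp
    rw [h1]
    convert h using 1
    show (6*(t-1)*(2-t) : ℝ) = _; push_cast; ring
    all_goals rfl
  have hgcont : Continuous g := by fun_prop
  have hgint : (∫ v in (1:ℝ)..2, g v) = 1 := by
    rw [intervalIntegral.integral_eq_sub_of_hasDerivAt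
      (fun t _ => hgderiv t) (hgcont.intervalIntegrable 1 2)]
    norm_num
  have hΩint : (∫ v in (1:ℝ)..2, g v • b) = b := by
    rw [intervalIntegral.integral_smul_const, hgint, one_smul]
  refine ⟨fun v => g v • b, ?_, ?_, ?_, ?_⟩
  · have hgsm : ContDiff ℝ (⊤ : ℕ∞) g := by rw [hgdef]; fun_prop
    exact hgsm.smul contDiff_const
  · simp [hgdef]
  · intro v hv
    have hgb : |g v| ≤ 3/2 := by
      rw [abs_le]
      constructor
      · simp only [hgdef]; nlinarith [hv.1, hv.2]
      · simp only [hgdef]; nlinarith [hv.1, hv.2, sq_nonneg (2*v - 3)]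
    have hbn : ‖b‖ ≤ ‖φ₁‖ + ‖ψ₁‖ + ‖c‖ + ‖a‖ + M := by
      have hP1n : ‖P1‖ ≤ (2:ℝ)⁻¹ * (‖ψ₁‖ + 2*‖φ₁‖ + ‖c‖) := by
        rw [hP1, norm_smul]
        simp only [norm_inv, Real.norm_ofNat]
        apply mul_le_mul_of_nonneg_left _ (by norm_num)
        calc ‖ψ₁ + (2:ℝ) • φ₁ + c‖ ≤ ‖ψ₁ + (2:ℝ) • φ₁‖ + ‖c‖ := norm_add_le _ _
          _ ≤ ‖ψ₁‖ + ‖(2:ℝ) • φ₁‖ + ‖c‖ := by linarith [norm_add_le ψ₁ ((2:ℝ) • φ₁)]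
          _ = ‖ψ₁‖ + 2*‖φ₁‖ + ‖c‖ := by rw [norm_smul]; simp
      have : ‖a - φ₁ - P1 - I‖ ≤ ‖a‖ + ‖φ₁‖ + ‖P1‖ + ‖I‖ := by
        calc ‖a - φ₁ - P1 - I‖ ≤ ‖a - φ₁ - P1‖ + ‖I‖ := norm_sub_le _ _
          _ ≤ ‖a - φ₁‖ + ‖P1‖ + ‖I‖ := by linarith [norm_sub_le (a - φ₁) P1]
          _ ≤ ‖a‖ + ‖φ₁‖ + ‖P1‖ + ‖I‖ := by linarith [norm_sub_le a φ₁]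
      rw [hb, norm_smul]
      simp only [norm_inv, Real.norm_ofNat]
      nlinarith [norm_nonneg φ₁, norm_nonneg ψ₁, norm_nonneg c, norm_nonneg a,
        norm_nonneg P1, norm_nonneg I, norm_nonneg (a - φ₁ - P1 - I)]
    calc ‖g v • b‖ = |g v| * ‖b‖ := by rw [norm_smul]; rfl
      _ ≤ (3/2) * (‖φ₁‖ + ‖ψ₁‖ + ‖c‖ + ‖a‖ + M) := by
          apply mul_le_mul hgb hbn (norm_nonneg _) (by norm_num)
      _ ≤ 2 * (‖φ₁‖ + ‖ψ₁‖ + ‖c‖ + ‖a‖ + M) := by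
          nlinarith [norm_nonneg φ₁, norm_nonneg ψ₁, norm_nonneg c, norm_nonneg a]
  · intro φ φ' hφ hD1 hφ1 hφ'1
    set Ω : ℝ → E := fun v => g v • b with hΩ
    have hΩ1 : Ω 1 = 0 := by simp [hΩ, hgdef]
    have hΩcont : Continuous Ω := (hgcont.smul continuous_const)
    set F : ℝ → E := fun w => φ' w - (2:ℝ) • Ω w with hF
    have hFcont : ContinuousOn F (Icc (1:ℝ) 2) :=
      fun x hx => (hD1 x hx).continuousWithinAt
    -- FTC for F on [1, v]
    have hFeq : ∀ v ∈ Icc (1:ℝ) 2, F v = φ' 1 + Pc v := by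
      intro v hv
      have := intervalIntegral.integral_eq_sub_of_hasDeriv_right_of_le hv.1
        (hFcont.mono (Icc_subset_Icc_right hv.2))
        (fun x hx => (hD1 x ⟨le_of_lt hx.1, le_trans (le_of_lt hx.2) hv.2⟩).mono_of_mem_nhdsWithin
          (nhdsWithin_le_nhds (Icc_mem_nhds hx.1 (lt_of_lt_of_le hx.2 hv.2))))
        (hc₁int v hv)
      have hF1 : F 1 = φ' 1 := by simp [hF, hΩ1]
      rw [hF1] at this
      have : Pc v = F v - φ' 1 := this
      rw [this]; abel
    have hφ'eq : ∀ v ∈ Icc (1:ℝ) 2, φ' v = φ' 1 + Pc v + (2:ℝ) • Ω v := by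
      intro v hv
      have h1 := hFeq v hv
      have : φ' v - (2:ℝ) • Ω v = φ' 1 + Pc v := h1
      rw [← this]; abel
    have hφ'cont : ContinuousOn φ' (Icc (1:ℝ) 2) := by
      have : ContinuousOn (fun v => φ' 1 + Pc v + (2:ℝ) • Ω v) (Icc (1:ℝ) 2) :=
        (continuousOn_const.add hPcCont).add (hΩcont.continuousOn.const_smul _)
      exact this.congr hφ'eq
    have hφ'int : IntervalIntegrable φ' volume 1 2 := by
      apply ContinuousOn.intervalIntegrable
      rwa [uIcc_of_le (by norm_num : (1:ℝ) ≤ 2)]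
    have hFTCφ : (∫ v in (1:ℝ)..2, φ' v) = φ 2 - φ 1 :=
      intervalIntegral.integral_eq_sub_of_hasDeriv_right_of_le (by norm_num)
        (fun x hx => (hφ x hx).continuousWithinAt)
        (fun x hx => (hφ x ⟨le_of_lt hx.1, le_of_lt hx.2⟩).mono_of_mem_nhdsWithin
          (nhdsWithin_le_nhds (Icc_mem_nhds hx.1 hx.2)))
        hφ'int
    have hsplit : (∫ v in (1:ℝ)..2, φ' v)
        = φ' 1 + I + (2:ℝ) • b := by
      have hcongr : (∫ v in (1:ℝ)..2, φ' v)
          = ∫ v in (1:ℝ)..2, (φ' 1 + Pc v + (2:ℝ) • Ω v) := by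
        apply intervalIntegral.integral_congr
        intro v hv
        rw [uIcc_of_le (by norm_num : (1:ℝ) ≤ 2)] at hv
        exact hφ'eq v hv
      have hPcint : IntervalIntegrable Pc volume 1 2 := by
        apply ContinuousOn.intervalIntegrable
        rwa [uIcc_of_le (by norm_num : (1:ℝ) ≤ 2)]
      have hΩint2 : IntervalIntegrable (fun v => (2:ℝ) • Ω v) volume 1 2 :=
        ((hΩcont.const_smul (2:ℝ)).intervalIntegrable 1 2)
      rw [hcongr, intervalIntegral.integral_add
        ((_root_.intervalIntegrable_const).add hPcint) hΩint2,
        intervalIntegral.integral_add _root_.intervalIntegrable_const hPcint]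
      have h2 : (∫ v in (1:ℝ)..2, (2:ℝ) • Ω v) = (2:ℝ) • b := by
        rw [intervalIntegral.integral_smul, hΩint]
      rw [h2, intervalIntegral.integral_const]
      norm_num
      exact hI.symm
    have : φ 2 = φ 1 + (φ' 1 + I + (2:ℝ) • b) := by
      rw [← hsplit, hFTCφ]; abel
    rw [this, hφ1, hφ'1, hb]
    module
end

section
/- The Schwarzschild area radius is jointly smooth in the mass and the coordinate away from zero mass: the function (M, s) ↦ r_M(s), where for M > 0 and s ∈ ℝ the value r_M(s) > 2M is the unique solution of s = r_M(s) + 2M·log( r_M(s)/(2M) − 1 ), is infinitely differentiable (C^∞) on the open set { (M, s) ∈ ℝ² : M > 0 }. -/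
open Real

private lemma phi_exists (s : ℝ) : ∃ x : ℝ, 0 < x ∧ x + Real.log x = s := by
  have h1 : Real.exp (s - Real.exp s) ≤ Real.exp s := by
    apply Real.exp_le_exp.2; nlinarith [Real.exp_pos s, Real.add_one_le_exp s]
  have hc : ContinuousOn (fun x => x + Real.log x) (Set.Icc (Real.exp (s - Real.exp s)) (Real.exp s)) := by
    intro x hx
    have hx0 : 0 < x := lt_of_lt_of_le (Real.exp_pos _) hx.1
    exact (continuousAt_id.add (Real.continuousAt_log hx0.ne')).continuousWithinAt
  have hmem : s ∈ Set.Icc ((fun x => x + Real.log x) (Real.exp (s - Real.exp s)))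
      ((fun x => x + Real.log x) (Real.exp s)) := by
    constructor
    · simp only [Real.log_exp]
      nlinarith [Real.exp_pos s, h1]
    · simp only [Real.log_exp]
      nlinarith [Real.exp_pos s]
  obtain ⟨x, hx, hfx⟩ := intermediate_value_Icc h1 hc hmem
  exact ⟨x, lt_of_lt_of_le (Real.exp_pos _) hx.1, hfx⟩

private noncomputable def wfun (s : ℝ) : ℝ := (phi_exists s).choose

private lemma wfun_pos (s : ℝ) : 0 < wfun s := (phi_exists s).choose_spec.1

private lemma wfun_spec (s : ℝ) : wfun s + Real.log (wfun s) = s := (phi_exists s).choose_spec.2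

private lemma phi_strictMono : StrictMonoOn (fun x : ℝ => x + Real.log x) (Set.Ioi 0) := by
  intro a ha b hb hab
  exact add_lt_add hab (Real.log_lt_log ha hab)

private lemma wfun_unique {x s : ℝ} (hx : 0 < x) (h : x + Real.log x = s) : wfun s = x :=
  phi_strictMono.injOn (wfun_pos s) hx (by rw [wfun_spec s, h])

private lemma wfun_contDiffAt (s : ℝ) : ContDiffAt ℝ (⊤ : ℕ∞) wfun s := by
  set x₀ := wfun s with hx₀def
  have hx₀ : 0 < x₀ := wfun_pos s
  set φ : ℝ → ℝ := fun x => x + Real.log x with hφ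
  have hφc : ContDiffAt ℝ (⊤ : ℕ∞) φ x₀ :=
    contDiffAt_id.add (Real.contDiffAt_log.2 hx₀.ne')
  have hc : (0:ℝ) < 1 + x₀⁻¹ := by positivity
  set f' : ℝ ≃L[ℝ] ℝ := ContinuousLinearEquiv.unitsEquivAut ℝ (Units.mk0 _ hc.ne') with hf'def
  have hd : HasDerivAt φ (1 + x₀⁻¹) x₀ := (hasDerivAt_id x₀).add (Real.hasDerivAt_log hx₀.ne')
  have hf' : HasFDerivAt φ (f' : ℝ →L[ℝ] ℝ) x₀ := by
    have := hd.hasFDerivAt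
    refine this.congr_fderiv ?_
    ext; simp [f']
  have hstrict := hφc.hasStrictFDerivAt' hf' (by simp)
  have heq : ∀ᶠ y in nhds (φ x₀), wfun y = hstrict.localInverse φ f' x₀ y := by
    apply hstrict.localInverse_unique
    filter_upwards [eventually_gt_nhds hx₀] with x hx
    exact wfun_unique hx rfl
  have hS : φ x₀ = s := wfun_spec s
  have hinv : ContDiffAt ℝ (⊤ : ℕ∞) (hstrict.localInverse φ f' x₀) (φ x₀) :=
    hφc.to_localInverse hf' (by simp)
  rw [hS] at hinv heq
  exact hinv.congr_of_eventuallyEq heq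

/-- Joint smoothness of the Schwarzschild area radius in mass and coordinate
away from zero mass: any function `R(M, s)` which for `M > 0` takes values
`R(M,s) > 2M` solving `s = R + 2M·log(R/(2M) − 1)` is `C^∞` on
`{(M, s) : M > 0}`. -/
theorem schwarzschild_area_radius_smooth_in_mass (R : ℝ × ℝ → ℝ)
    (hR : ∀ p : ℝ × ℝ, 0 < p.1 →
      2 * p.1 < R p ∧ p.2 = R p + 2 * p.1 * Real.log (R p / (2 * p.1) - 1)) :
    ContDiffOn ℝ (⊤ : ℕ∞) R {p : ℝ × ℝ | 0 < p.1} := by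
  have hG : ContDiffOn ℝ (⊤ : ℕ∞)
      (fun p : ℝ × ℝ => 2 * p.1 * (1 + wfun (p.2 / (2 * p.1) - 1))) {p : ℝ × ℝ | 0 < p.1} := by
    intro p hp
    have hp1 : (0:ℝ) < p.1 := hp
    apply ContDiffAt.contDiffWithinAt
    have h1 : ContDiffAt ℝ (⊤ : ℕ∞) (fun p : ℝ × ℝ => p.2 / (2 * p.1) - 1) p := by
      exact (contDiffAt_snd.div (contDiffAt_const.mul contDiffAt_fst) (by positivity)).sub
        contDiffAt_const
    exact (contDiffAt_const.mul contDiffAt_fst).mul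
      (contDiffAt_const.add ((wfun_contDiffAt _).comp p h1))
  apply hG.congr
  intro p hp
  have hp1 : (0:ℝ) < p.1 := hp
  obtain ⟨h1, h2⟩ := hR p hp1
  set M := p.1
  set r := R p
  have hM : (0:ℝ) < 2 * M := by positivity
  have hx : 0 < r / (2 * M) - 1 := by
    rw [sub_pos, lt_div_iff₀ hM]; linarith
  have hphi : (r / (2 * M) - 1) + Real.log (r / (2 * M) - 1) = p.2 / (2 * M) - 1 := by
    rw [h2]; field_simp; ring
  have := wfun_unique hx hphi
  rw [this]
  field_simp
  ring
end
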